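/- Let a be an integer with a ≡ 3 (mod 4). Then the function n ↦ (κ_a(n) : ℂ) is a mock character of mockulus 2: it is completely multiplicative, 2-automatic (its 2-kernel is finite), not eventually periodic, κ_a(0) = 0, and there exists an integer d ≥ 1 such that for all n ≥ 1, κ_a(n) = 0 if and only if gcd(n, d) ≠ 1. -/

import Mathlib

/-- `f : ℕ → ℂ` is completely multiplicative. -/
def CompletelyMultiplicativeFun (f : ℕ → ℂ) : Prop :=
  f 1 = 1 ∧ ∀ m n : ℕ, f (m * n) = f m * f n

/-- `f : ℕ → ℂ` is `q`-automatic: its `q`-kernel is finite. -/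
def IsAutomatic (q : ℕ) (f : ℕ → ℂ) : Prop :=
  Set.Finite {g : ℕ → ℂ | ∃ k s : ℕ, s < q ^ k ∧ g = fun m => f (q ^ k * m + s)}

/-- `f : ℕ → ℂ` is eventually periodic. -/
def EventuallyPeriodicFun (f : ℕ → ℂ) : Prop :=
  ∃ N T : ℕ, 1 ≤ T ∧ ∀ n ≥ N, f (n + T) = f n

/-- `f : ℕ → ℂ` is a mock character of mockulus `q`. -/
def IsMockCharacter (q : ℕ) (f : ℕ → ℂ) : Prop :=
  CompletelyMultiplicativeFun f ∧ f 0 = 0 ∧ IsAutomatic q f ∧ ¬ EventuallyPeriodicFun f ∧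
    ∃ d : ℕ, 1 ≤ d ∧ ∀ n : ℕ, 1 ≤ n → (f n = 0 ↔ Nat.gcd n d ≠ 1)

/-- The Kronecker symbol `κ_a(n) = (a | n)` for `n : ℕ`. -/
def kron (a : ℤ) (n : ℕ) : ℤ :=
  if n = 0 then 0
  else (ZMod.χ₈ (a : ZMod 8)) ^ (padicValNat 2 n) * jacobiSym a (n / 2 ^ padicValNat 2 n)


/-!
Writing `n = 2 ^ v * u` with `u` odd, `κ_a(n) = χ₈(a) ^ v * J(a | u)`, and `J(a | u)` depends only
on `u` modulo `4|a|`. Hence every element of the `2`-kernel is a constant (a value of `κ_a`) times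
either `κ_a` or `m ↦ κ_a ((x * m + y) mod 4|a|)`, and there are finitely many of those.

An eventual period `T = 2 ^ t * T₀` with `T₀` odd yields, after cancelling `χ₈(a) ^ t ≠ 0`, the
odd eventual period `T₀`. Then `2|a| * T₀ ≡ 2|a| (mod 4|a|)` would force
`J(a | 1) = J(a | 2|a| + 1)`, whereas quadratic reciprocity gives `J(a | 2|a| + 1) = -1` for
`a ≡ 3 (mod 4)`.
-/

theorem Nat.exists_pow_mul_add_eq_pow_mul_not_dvd {q k s : ℕ} (hq : 1 < q) (hs : s ≠ 0)
    (hsk : s < q ^ k) :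
    ∃ j r w : ℕ, ∀ m, q ^ k * m + s = q ^ j * (q ^ r * m + w) ∧ ¬ q ∣ q ^ r * m + w := by
  obtain ⟨j, w, hw, rfl⟩ := Nat.exists_eq_pow_mul_and_not_dvd hs q hq.ne'
  have hjk : j < k := by
    rw [← Nat.pow_lt_pow_iff_right hq]
    exact (Nat.le_mul_of_pos_right _ (Nat.pos_of_ne_zero (right_ne_zero_of_mul hs))).trans_lt hsk
  refine ⟨j, k - j, w, fun m => ⟨?_, ?_⟩⟩
  · rw [mul_add, ← mul_assoc, ← pow_add, Nat.add_sub_cancel' hjk.le]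
  · rwa [Nat.dvd_add_right (dvd_mul_of_dvd_left (dvd_pow_self q (Nat.sub_ne_zero_of_lt hjk)) m)]

theorem eventuallyPeriodic_apply_add_mul {α : Type*} {g : ℕ → α} {N T : ℕ}
    (h : ∀ n ≥ N, g (n + T) = g n) (k : ℕ) {n : ℕ} (hn : N ≤ n) : g (n + k * T) = g n := by
  induction k with
  | zero => simp
  | succ k ih => rw [add_mul, one_mul, ← add_assoc, h _ (hn.trans (Nat.le_add_right _ _)), ih]

namespace CompletelyMultiplicativeFun

variable {f : ℕ → ℂ}

theorem map_pow (hf : CompletelyMultiplicativeFun f) (n k : ℕ) : f (n ^ k) = f n ^ k := by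
  induction k with
  | zero => simpa using hf.1
  | succ k ih => rw [pow_succ, hf.2, ih, pow_succ]

theorem isAutomatic {q M : ℕ} [NeZero M] (hf : CompletelyMultiplicativeFun f)
    (hfin : (Set.range f).Finite) (hq : 1 < q) (hper : ∀ n, ¬ q ∣ n → f n = f (n % M)) :
    IsAutomatic q f := by
  have := hfin.to_subtype
  let G : (Set.range f × ZMod M × ZMod M) ⊕ Set.range f → ℕ → ℂ :=
    Sum.elim (fun p m => p.1 * f (p.2.1 * m + p.2.2).val) (fun c m => c * f m)
  refine (Set.finite_range G).subset ?_
  rintro g ⟨k, s, hsk, rfl⟩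
  rcases eq_or_ne s 0 with rfl | hs
  · exact ⟨.inr ⟨f (q ^ k), q ^ k, rfl⟩, funext fun m => by simp [G, hf.2]⟩
  obtain ⟨j, r, w, hjrw⟩ := Nat.exists_pow_mul_add_eq_pow_mul_not_dvd hq hs hsk
  refine ⟨.inl (⟨f (q ^ j), _, rfl⟩, (q ^ r : ℕ), w), funext fun m => ?_⟩
  obtain ⟨hsplit, hndvd⟩ := hjrw m
  simp only [G, Sum.elim_inl]
  rw [hsplit, hf.2, hper _ hndvd, ← Nat.cast_mul, ← Nat.cast_add, ZMod.val_natCast]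

theorem exists_eventual_period_not_dvd {q : ℕ} (hf : CompletelyMultiplicativeFun f)
    (hq : 1 < q) (hfq : f q ≠ 0) (hper : EventuallyPeriodicFun f) :
    ∃ N T, ¬ q ∣ T ∧ ∀ n ≥ N, f (n + T) = f n := by
  obtain ⟨N, T, hT, h⟩ := hper
  obtain ⟨t, T₀, hT₀, rfl⟩ :=
    Nat.exists_eq_pow_mul_and_not_dvd (Nat.one_le_iff_ne_zero.mp hT) q hq.ne'
  refine ⟨N, T₀, hT₀, fun n hn => mul_left_cancel₀ (pow_ne_zero t hfq) ?_⟩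
  rw [← hf.map_pow, ← hf.2, ← hf.2, mul_add]
  exact h _ (hn.trans (Nat.le_mul_of_pos_left _ (by positivity)))

end CompletelyMultiplicativeFun

theorem ZMod.χ₈_int_eq_zero_iff_even (a : ℤ) : χ₈ a = 0 ↔ Even a := by
  rw [χ₈_int_eq_if_mod_eight, Int.even_iff]
  split_ifs <;> simp_all

theorem jacobiSym_two_mul_add_one_left (n : ℕ) : jacobiSym (2 * n + 1 : ℕ) n = 1 := by
  rw [jacobiSym.mod_left' (a₂ := 1) (by push_cast; simp [Int.add_emod]), jacobiSym.one_left]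

theorem jacobiSym_two_mul_natAbs_add_one {a : ℤ} (h : a % 4 = 3) :
    jacobiSym a (2 * a.natAbs + 1) = -1 := by
  obtain ⟨A, rfl | rfl⟩ := Int.eq_nat_or_neg a
  · rw [Int.natAbs_natCast, jacobiSym.quadratic_reciprocity_three_mod_four (by omega) (by omega),
      jacobiSym_two_mul_add_one_left]
  · have hb : (2 * A + 1) % 4 = 3 := by omega
    rw [Int.natAbs_neg, Int.natAbs_natCast, jacobiSym.neg _ (Nat.odd_iff.mpr (by omega)),
      ZMod.χ₄_nat_three_mod_four hb, jacobiSym.quadratic_reciprocity_one_mod_four (by omega)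
      (Nat.odd_iff.mpr (by omega)), jacobiSym_two_mul_add_one_left]
    rfl

section Kron

variable (a : ℤ)

theorem kron_of_ne_zero {n : ℕ} (hn : n ≠ 0) :
    kron a n = ZMod.χ₈ a ^ n.factorization 2 * jacobiSym a (ordCompl[2] n) := by
  simp [kron, hn, Nat.factorization_def _ Nat.prime_two]

theorem kron_of_odd {n : ℕ} (hn : Odd n) : kron a n = jacobiSym a n := by
  rw [kron_of_ne_zero a (by rintro rfl; simp at hn),
    Nat.factorization_eq_zero_of_not_dvd (by simpa [← even_iff_two_dvd] using hn)]
  simp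

theorem kron_one : kron a 1 = 1 := by
  rw [kron_of_odd a odd_one, jacobiSym.one_right]

theorem kron_mul (m n : ℕ) : kron a (m * n) = kron a m * kron a n := by
  rcases eq_or_ne m 0 with rfl | hm
  · simp [kron]
  rcases eq_or_ne n 0 with rfl | hn
  · simp [kron]
  rw [kron_of_ne_zero a hm, kron_of_ne_zero a hn, kron_of_ne_zero a (mul_ne_zero hm hn),
    Nat.ordCompl_mul, Nat.factorization_mul hm hn, Finsupp.add_apply, pow_add,
    jacobiSym.mul_right' a (Nat.ordCompl_pos 2 hm).ne' (Nat.ordCompl_pos 2 hn).ne']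
  ring

theorem kron_two_pow (k : ℕ) : kron a (2 ^ k) = ZMod.χ₈ a ^ k := by
  rw [kron_of_ne_zero a (by positivity), Nat.factorization_pow_self Nat.prime_two]
  simp

theorem kron_two_pow_mul (k n : ℕ) : kron a (2 ^ k * n) = ZMod.χ₈ a ^ k * kron a n := by
  rw [kron_mul, kron_two_pow]

theorem kron_mod_of_odd {n : ℕ} (hn : Odd n) : kron a n = kron a (n % (4 * a.natAbs)) := by
  rw [kron_of_odd a hn, kron_of_odd a (hn.mod_even ⟨2 * a.natAbs, by ring⟩),
    jacobiSym.mod_right a hn]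

theorem abs_kron_le_one (n : ℕ) : |kron a n| ≤ 1 := by
  rcases eq_or_ne n 0 with rfl | hn
  · simp [kron]
  have hχ : |ZMod.χ₈ a| ≤ 1 := by
    rcases ZMod.isQuadratic_χ₈ a with h | h | h <;> simp [h]
  have hJ : |jacobiSym a (ordCompl[2] n)| ≤ 1 := by
    rcases jacobiSym.trichotomy a (ordCompl[2] n) with h | h | h <;> simp [h]
  rw [kron_of_ne_zero a hn, abs_mul, abs_pow]
  exact mul_le_one₀ (pow_le_one₀ (abs_nonneg _) hχ) (abs_nonneg _) hJ

theorem kron_eq_zero_iff {n : ℕ} (hn : n ≠ 0) : kron a n = 0 ↔ ¬ n.Coprime a.natAbs := by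
  obtain ⟨k, u, hu, rfl⟩ := Nat.exists_eq_two_pow_mul_odd hn
  have : NeZero u := ⟨by rintro rfl; simp at hu⟩
  have hpow : ZMod.χ₈ a ^ k = 0 ↔ ¬ (2 ^ k).Coprime a.natAbs := by
    rcases Nat.eq_zero_or_pos k with rfl | hk
    · simp
    rw [pow_eq_zero_iff hk.ne', Nat.coprime_pow_left_iff hk, Nat.coprime_two_left,
      Int.natAbs_odd, ZMod.χ₈_int_eq_zero_iff_even, Int.not_odd_iff_even]
  rw [kron_two_pow_mul, kron_of_odd a hu, mul_eq_zero, hpow, jacobiSym.eq_zero_iff_not_coprime,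
    Nat.coprime_mul_iff_left, Int.gcd, Int.natAbs_natCast, Nat.gcd_comm, not_and_or]

theorem completelyMultiplicativeFun_kron :
    CompletelyMultiplicativeFun (fun n => (kron a n : ℂ)) :=
  ⟨by simp [kron_one], fun m n => by simp [kron_mul]⟩

theorem finite_range_kron : (Set.range fun n => (kron a n : ℂ)).Finite := by
  refine ((Set.finite_Icc (-1 : ℤ) 1).image (Int.cast : ℤ → ℂ)).subset ?_
  rintro _ ⟨n, rfl⟩
  exact ⟨kron a n, abs_le.mp (abs_kron_le_one a n), rfl⟩

variable {a}

theorem kron_not_eventually_periodic_of_odd (h : a % 4 = 3) {N T : ℕ} (hT : Odd T) :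
    ¬ ∀ n ≥ N, kron a (n + T) = kron a n := by
  intro hper
  set A := a.natAbs
  obtain ⟨l, rfl⟩ := hT
  have hA : 1 ≤ A := by omega
  have hmod {n : ℕ} (hn : Odd n) : kron a n = kron a (n % (4 * A)) := kron_mod_of_odd a hn
  have hstart : kron a (4 * A * N + 1) = 1 := by
    rw [hmod ⟨2 * A * N, by ring⟩, Nat.mul_add_mod, Nat.mod_eq_of_lt (by omega), kron_one]
  -- `2 * A` periods of odd length shift `1 (mod 4A)` to `2A + 1 (mod 4A)`.
  have hshift : kron a (4 * A * N + 1 + 2 * A * (2 * l + 1)) = -1 := by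
    rw [show 4 * A * N + 1 + 2 * A * (2 * l + 1) = 4 * A * (N + l) + (2 * A + 1) by ring,
      hmod ⟨2 * A * (N + l) + A, by ring⟩, Nat.mul_add_mod, Nat.mod_eq_of_lt (by omega),
      kron_of_odd a ⟨A, by ring⟩, jacobiSym_two_mul_natAbs_add_one h]
  have := eventuallyPeriodic_apply_add_mul hper (2 * A) (n := 4 * A * N + 1) (by nlinarith)
  rw [hshift, hstart] at this
  exact absurd this (by decide)

end Kron

theorem kron_is_mock_character_of_three_mod_four (a : ℤ) (h : a ≡ 3 [ZMOD 4]) :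
    IsMockCharacter 2 (fun n => (kron a n : ℂ)) := by
  have h4 : a % 4 = 3 := h
  have hA : 1 ≤ a.natAbs := by omega
  have hf := completelyMultiplicativeFun_kron a
  have hodd {n : ℕ} (hn : ¬ 2 ∣ n) : Odd n := Nat.odd_iff.mpr (Nat.two_dvd_ne_zero.mp hn)
  refine ⟨hf, by simp [kron], ?_, ?_, a.natAbs, hA, fun n hn => ?_⟩
  · have : NeZero (4 * a.natAbs) := ⟨by omega⟩
    exact hf.isAutomatic (finite_range_kron a) one_lt_two fun n hn =>
      congrArg _ (kron_mod_of_odd a (hodd hn))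
  · intro hper
    have h2 : kron a 2 ≠ 0 := by
      rw [Ne, kron_eq_zero_iff a two_ne_zero, not_not, Nat.coprime_two_left, Int.natAbs_odd]
      exact Int.odd_iff.mpr (by omega)
    obtain ⟨N, T, hT, hNT⟩ :=
      hf.exists_eventual_period_not_dvd one_lt_two (by simpa using h2) hper
    exact kron_not_eventually_periodic_of_odd h4 (hodd hT) fun n hn => by exact_mod_cast hNT n hn
  · rw [Int.cast_eq_zero, kron_eq_zero_iff a (by omega)]
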